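/- Suppose f is differentiable, ‖G(X)‖_F ≤ M₁ for all X ∈ Ω, ∇g is Lipschitz continuous on Ω with constant M₂ (with respect to the Frobenius norm), and β ≥ max{12·M₁, 6·M₂} with β > 0. Then for every X ∈ ℝ^{n×p} with ‖XᵀX − I_p‖_F ≤ 1/6, it holds that ‖∇h(X)‖_F ≥ (1/2)·‖grad f(P(X))‖_F + (β/4)·‖XᵀX − I_p‖_F. -/

import Mathlib

/-!
Write `D = XᵀX - 1`. The penalty contributes `β X D` to `∇h(X)`, and its inner product with
`∇g(X)` collapses to `-(3/2)⟨Φ(XᵀG), D²⟩`, which is of order `M₁‖D‖²`, whereas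
`‖X D‖² ≥ (5/6)‖D‖²`; hence `‖∇h(X)‖² ≥ ‖∇g(X)‖² + (3β‖D‖/4)²`. On the Stiefel manifold
`A = 1`, so `∇g(P(X))` is the Riemannian gradient of `f` at `P(X)`, and the Lipschitz bound together
with `‖X - P(X)‖ ≤ ‖D‖` gives `‖grad f(P(X))‖ ≤ ‖∇g(X)‖ + β‖D‖/6`.
-/

open Matrix

attribute [local instance] Matrix.frobeniusNormedAddCommGroup Matrix.frobeniusNormedSpace

namespace ExPen

noncomputable def finner {n p : ℕ} (A B : Matrix (Fin n) (Fin p) ℝ) : ℝ := (Aᵀ * B).trace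

noncomputable def Phi {p : ℕ} (M : Matrix (Fin p) (Fin p) ℝ) : Matrix (Fin p) (Fin p) ℝ :=
  (1 / 2 : ℝ) • (M + Mᵀ)

noncomputable def Amap {n p : ℕ} (X : Matrix (Fin n) (Fin p) ℝ) : Matrix (Fin p) (Fin p) ℝ :=
  (3 / 2 : ℝ) • (1 : Matrix (Fin p) (Fin p) ℝ) - (1 / 2 : ℝ) • (Xᵀ * X)

noncomputable def g {n p : ℕ} (f : Matrix (Fin n) (Fin p) ℝ → ℝ)
    (X : Matrix (Fin n) (Fin p) ℝ) : ℝ := f (X * Amap X)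

noncomputable def hpen {n p : ℕ} (f : Matrix (Fin n) (Fin p) ℝ → ℝ) (β : ℝ)
    (X : Matrix (Fin n) (Fin p) ℝ) : ℝ := g f X + β / 4 * ‖Xᵀ * X - 1‖ ^ 2

noncomputable def dualCLM {n p : ℕ} (G : Matrix (Fin n) (Fin p) ℝ) :
    Matrix (Fin n) (Fin p) ℝ →L[ℝ] ℝ :=
  LinearMap.toContinuousLinearMap
    { toFun := fun D => (Gᵀ * D).trace
      map_add' := by intro D E; simp [Matrix.mul_add]
      map_smul' := by intro c D; simp [Matrix.mul_smul] }

def HasGradAt {n p : ℕ} (φ : Matrix (Fin n) (Fin p) ℝ → ℝ)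
    (X G : Matrix (Fin n) (Fin p) ℝ) : Prop :=
  HasFDerivAt φ (dualCLM G) X

noncomputable def specNorm {n p : ℕ} (X : Matrix (Fin n) (Fin p) ℝ) : ℝ :=
  ‖LinearMap.toContinuousLinearMap
    (Matrix.toEuclideanLin X : EuclideanSpace ℝ (Fin p) →ₗ[ℝ] EuclideanSpace ℝ (Fin n))‖

lemma posSemidef_tmul {n p : ℕ} (X : Matrix (Fin n) (Fin p) ℝ) : (Xᵀ * X).PosSemidef := by
  simpa [Matrix.conjTranspose_eq_transpose_of_trivial] using
    Matrix.posSemidef_conjTranspose_mul_self X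

noncomputable def psdSqrt {p : ℕ} {A : Matrix (Fin p) (Fin p) ℝ} (hA : A.PosSemidef) :
    Matrix (Fin p) (Fin p) ℝ :=
  hA.1.eigenvectorUnitary.1 * diagonal ((↑) ∘ (√·) ∘ hA.1.eigenvalues) *
  (star hA.1.eigenvectorUnitary : Matrix (Fin p) (Fin p) ℝ)

noncomputable def Pst {n p : ℕ} (X : Matrix (Fin n) (Fin p) ℝ) : Matrix (Fin n) (Fin p) ℝ :=
  X * (psdSqrt (posSemidef_tmul X))⁻¹

section Frobenius

variable {m n : Type*} [Fintype m] [Fintype n]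

-- Mathlib's Frobenius norm is by definition this `L²`-of-`L²` norm, so `tr (Aᵀ * B)` is the
-- inner product behind it.
def frobeniusEquiv : Matrix m n ℝ ≃ₗᵢ[ℝ] PiLp 2 (fun _ : m => EuclideanSpace ℝ n) where
  toFun A := WithLp.toLp 2 fun i => WithLp.toLp 2 (A i)
  invFun x i j := x i j
  map_add' _ _ := rfl
  map_smul' _ _ := rfl
  left_inv _ := rfl
  right_inv _ := rfl
  norm_map' _ := rfl

lemma inner_frobeniusEquiv (A B : Matrix m n ℝ) :
    inner ℝ (frobeniusEquiv A) (frobeniusEquiv B) = (Aᵀ * B).trace := by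
  change ∑ i, inner ℝ (WithLp.toLp 2 (A i)) (WithLp.toLp 2 (B i)) = _
  simp [PiLp.inner_apply, trace, mul_apply, Finset.sum_comm (γ := m), mul_comm]

lemma frobenius_norm_sq_eq_trace (A : Matrix m n ℝ) : ‖A‖ ^ 2 = (Aᵀ * A).trace := by
  rw [← inner_frobeniusEquiv, real_inner_self_eq_norm_sq, LinearIsometryEquiv.norm_map]

lemma abs_trace_transpose_mul_le (A B : Matrix m n ℝ) : |(Aᵀ * B).trace| ≤ ‖A‖ * ‖B‖ := by
  simpa [← inner_frobeniusEquiv] using abs_real_inner_le_norm (frobeniusEquiv A) (frobeniusEquiv B)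

lemma frobenius_norm_add_smul_sq (A B : Matrix m n ℝ) (c : ℝ) :
    ‖A + c • B‖ ^ 2 = ‖A‖ ^ 2 + 2 * c * (Aᵀ * B).trace + c ^ 2 * ‖B‖ ^ 2 := by
  rw [← LinearIsometryEquiv.norm_map frobeniusEquiv, map_add, map_smul, norm_add_sq_real,
    inner_smul_right, norm_smul, inner_frobeniusEquiv, LinearIsometryEquiv.norm_map,
    LinearIsometryEquiv.norm_map, mul_pow, Real.norm_eq_abs, sq_abs]
  ring

end Frobenius

section Gram

variable {m n k : Type*} [Fintype m] [Fintype n] [Fintype k] [DecidableEq n]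

lemma abs_frobenius_norm_mul_sq_sub_le (X : Matrix m n ℝ) (V : Matrix n k ℝ) :
    |‖X * V‖ ^ 2 - ‖V‖ ^ 2| ≤ ‖Xᵀ * X - 1‖ * ‖V‖ ^ 2 := by
  have h : ‖X * V‖ ^ 2 - ‖V‖ ^ 2 = (Vᵀ * ((Xᵀ * X - 1) * V)).trace := by
    rw [frobenius_norm_sq_eq_trace, frobenius_norm_sq_eq_trace, Matrix.sub_mul, Matrix.one_mul,
      Matrix.mul_sub, trace_sub, transpose_mul, Matrix.mul_assoc, Matrix.mul_assoc]
  rw [h]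
  calc _ ≤ ‖V‖ * ‖(Xᵀ * X - 1) * V‖ := abs_trace_transpose_mul_le _ _
    _ ≤ ‖V‖ * (‖Xᵀ * X - 1‖ * ‖V‖) := by gcongr; exact frobenius_norm_mul _ _
    _ = ‖Xᵀ * X - 1‖ * ‖V‖ ^ 2 := by ring

lemma frobenius_norm_mul_of_transpose_mul_self {Q : Matrix m n ℝ} (hQ : Qᵀ * Q = 1)
    (V : Matrix n k ℝ) : ‖Q * V‖ = ‖V‖ := by
  have h := abs_frobenius_norm_mul_sq_sub_le Q V
  rw [hQ, sub_self, norm_zero, zero_mul, abs_nonpos_iff, sub_eq_zero] at h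
  exact (pow_left_inj₀ (norm_nonneg _) (norm_nonneg _) two_ne_zero).mp h

lemma frobenius_norm_transpose_mul_sq_le (X : Matrix m n ℝ) (W : Matrix m k ℝ) :
    ‖Xᵀ * W‖ ^ 2 ≤ (1 + ‖Xᵀ * X - 1‖) * ‖W‖ ^ 2 := by
  have hX : ‖X * (Xᵀ * W)‖ ^ 2 ≤ (1 + ‖Xᵀ * X - 1‖) * ‖Xᵀ * W‖ ^ 2 := by
    linarith [(abs_le.mp (abs_frobenius_norm_mul_sq_sub_le X (Xᵀ * W))).2]
  have hCS : ‖Xᵀ * W‖ ^ 2 ≤ ‖W‖ * ‖X * (Xᵀ * W)‖ := by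
    rw [frobenius_norm_sq_eq_trace, transpose_mul, transpose_transpose, Matrix.mul_assoc]
    exact (le_abs_self _).trans (abs_trace_transpose_mul_le _ _)
  have h4 : (‖Xᵀ * W‖ ^ 2) ^ 2 ≤ ((1 + ‖Xᵀ * X - 1‖) * ‖W‖ ^ 2) * ‖Xᵀ * W‖ ^ 2 := by
    calc (‖Xᵀ * W‖ ^ 2) ^ 2 ≤ (‖W‖ * ‖X * (Xᵀ * W)‖) ^ 2 := by gcongr
      _ = ‖W‖ ^ 2 * ‖X * (Xᵀ * W)‖ ^ 2 := by ring
      _ ≤ ‖W‖ ^ 2 * ((1 + ‖Xᵀ * X - 1‖) * ‖Xᵀ * W‖ ^ 2) := by gcongr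
      _ = _ := by ring
  rcases (sq_nonneg ‖Xᵀ * W‖).eq_or_lt with h0 | hpos
  · rw [← h0]; positivity
  · rw [sq (‖Xᵀ * W‖ ^ 2)] at h4
    exact le_of_mul_le_mul_right h4 hpos

lemma mulVec_injective_of_norm_lt_one {X : Matrix m n ℝ} (hX : ‖Xᵀ * X - 1‖ < 1) :
    Function.Injective X.mulVec := by
  refine (injective_iff_map_eq_zero X.mulVecLin).mpr fun v hv => ?_
  have h := abs_frobenius_norm_mul_sq_sub_le X (replicateCol Unit v)
  rw [mulVecLin_apply] at hv
  rw [← replicateCol_mulVec, hv, replicateCol_zero, norm_zero, zero_pow two_ne_zero, zero_sub,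
    abs_neg, abs_of_nonneg (sq_nonneg _)] at h
  have : ‖replicateCol Unit v‖ ^ 2 = 0 := by nlinarith [sq_nonneg ‖replicateCol Unit v‖]
  simpa using this

lemma posDef_transpose_mul_self_of_norm_lt_one {X : Matrix m n ℝ} (hX : ‖Xᵀ * X - 1‖ < 1) :
    (Xᵀ * X).PosDef := by
  simpa using PosDef.conjTranspose_mul_self X (mulVec_injective_of_norm_lt_one hX)

end Gram

lemma specNorm_le_sqrt {n p : ℕ} (X : Matrix (Fin n) (Fin p) ℝ) :
    specNorm X ≤ √(1 + ‖Xᵀ * X - 1‖) := by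
  refine ContinuousLinearMap.opNorm_le_bound _ (Real.sqrt_nonneg _) fun v => ?_
  have h := (abs_le.mp (abs_frobenius_norm_mul_sq_sub_le X (replicateCol Unit v.ofLp))).2
  rw [← replicateCol_mulVec, frobenius_norm_replicateCol, frobenius_norm_replicateCol,
    WithLp.toLp_ofLp] at h
  calc _ = √(‖WithLp.toLp 2 (X *ᵥ v.ofLp)‖ ^ 2) := by
          rw [Real.sqrt_sq (norm_nonneg _)]; rfl
    _ ≤ √((1 + ‖Xᵀ * X - 1‖) * ‖v‖ ^ 2) := Real.sqrt_le_sqrt (by linarith)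
    _ = _ := by rw [Real.sqrt_mul (by positivity), Real.sqrt_sq (norm_nonneg _)]

lemma frobenius_norm_sub_one_le_of_posSemidef {k : Type*} [Fintype k] [DecidableEq k]
    {S : Matrix k k ℝ} (hS : S.PosSemidef) : ‖S - 1‖ ≤ ‖S * S - 1‖ := by
  have hfac : S * S - 1 = (S - 1) + (1 : ℝ) • (S * (S - 1)) := by
    rw [one_smul, Matrix.mul_sub, Matrix.mul_one]; abel
  have hpos : 0 ≤ ((S - 1)ᵀ * (S * (S - 1))).trace := by
    rw [← Matrix.mul_assoc, ← conjTranspose_eq_transpose_of_trivial]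
    exact (hS.conjTranspose_mul_mul_same (S - 1)).trace_nonneg
  have hsq : ‖S - 1‖ ^ 2 ≤ ‖S * S - 1‖ ^ 2 := by
    rw [hfac, frobenius_norm_add_smul_sq]
    nlinarith [sq_nonneg ‖S * (S - 1)‖]
  exact (pow_le_pow_iff_left₀ (norm_nonneg _) (norm_nonneg _) two_ne_zero).mp hsq

section StiefelProjection

open scoped MatrixOrder

variable {n p : ℕ}

lemma psdSqrt_eq_sqrt {A : Matrix (Fin p) (Fin p) ℝ} (hA : A.PosSemidef) :
    psdSqrt hA = CFC.sqrt A := by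
  rw [CFC.sqrt_eq_real_sqrt A hA.nonneg, cfcₙ_eq_cfc, hA.1.cfc_eq]
  rfl

variable {X : Matrix (Fin n) (Fin p) ℝ}

lemma psdSqrt_mul_self_transpose_mul_self :
    psdSqrt (posSemidef_tmul X) * psdSqrt (posSemidef_tmul X) = Xᵀ * X := by
  rw [psdSqrt_eq_sqrt]
  exact CFC.sqrt_mul_sqrt_self _ (posSemidef_tmul X).nonneg

lemma posSemidef_psdSqrt_transpose_mul_self : (psdSqrt (posSemidef_tmul X)).PosSemidef := by
  rw [psdSqrt_eq_sqrt]
  exact (CFC.sqrt_nonneg _).posSemidef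

lemma isUnit_det_psdSqrt_transpose_mul_self (hX : (Xᵀ * X).PosDef) :
    IsUnit (psdSqrt (posSemidef_tmul X)).det := by
  rw [← isUnit_iff_isUnit_det, psdSqrt_eq_sqrt, CFC.isUnit_sqrt_iff _ (posSemidef_tmul X).nonneg]
  exact hX.isUnit

lemma Pst_mul_psdSqrt (hX : (Xᵀ * X).PosDef) : Pst X * psdSqrt (posSemidef_tmul X) = X := by
  rw [Pst, Matrix.mul_assoc, nonsing_inv_mul _ (isUnit_det_psdSqrt_transpose_mul_self hX),
    Matrix.mul_one]

lemma transpose_Pst_mul_Pst (hX : (Xᵀ * X).PosDef) : (Pst X)ᵀ * Pst X = 1 := by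
  set S := psdSqrt (posSemidef_tmul X)
  have hS := isUnit_det_psdSqrt_transpose_mul_self hX
  have hSt : Sᵀ = S := (by simpa using posSemidef_psdSqrt_transpose_mul_self.1 : S.IsSymm)
  change (X * S⁻¹)ᵀ * (X * S⁻¹) = 1
  rw [transpose_mul, transpose_nonsing_inv, hSt, Matrix.mul_assoc, ← Matrix.mul_assoc Xᵀ,
    ← psdSqrt_mul_self_transpose_mul_self, Matrix.mul_assoc, mul_nonsing_inv _ hS, Matrix.mul_one,
    nonsing_inv_mul _ hS]

lemma frobenius_norm_sub_Pst_le (hX : (Xᵀ * X).PosDef) : ‖X - Pst X‖ ≤ ‖Xᵀ * X - 1‖ := by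
  set S := psdSqrt (posSemidef_tmul X)
  have hXP : X - Pst X = Pst X * (S - 1) := by
    rw [Matrix.mul_sub, Pst_mul_psdSqrt hX, Matrix.mul_one]
  rw [hXP, frobenius_norm_mul_of_transpose_mul_self (transpose_Pst_mul_Pst hX),
    ← psdSqrt_mul_self_transpose_mul_self]
  exact frobenius_norm_sub_one_le_of_posSemidef posSemidef_psdSqrt_transpose_mul_self

end StiefelProjection

section Calculus

variable {E : Type*} [NormedAddCommGroup E] [NormedSpace ℝ E] {l m k : Type*} [Fintype l]
  [Fintype m] [Fintype k] {x : E}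

noncomputable def mulCLM (l m k : Type*) [Fintype l] [Fintype m] [Fintype k] :
    Matrix l m ℝ →L[ℝ] Matrix m k ℝ →L[ℝ] Matrix l k ℝ :=
  (mulLinearMap ℝ : Matrix l m ℝ →ₗ[ℝ] _).toContinuousBilinearMap

noncomputable def transposeCLM (m k : Type*) [Fintype m] [Fintype k] :
    Matrix m k ℝ →L[ℝ] Matrix k m ℝ :=
  LinearMap.toContinuousLinearMap (transposeLinearEquiv m k ℝ ℝ).toLinearMap

lemma HasFDerivAt.matrix_mul {f : E → Matrix l m ℝ} {g : E → Matrix m k ℝ}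
    {f' : E →L[ℝ] Matrix l m ℝ} {g' : E →L[ℝ] Matrix m k ℝ}
    (hf : HasFDerivAt f f' x) (hg : HasFDerivAt g g' x) :
    HasFDerivAt (fun y => f y * g y)
      ((mulCLM l m k).precompR E (f x) g' + (mulCLM l m k).precompL E f' (g x)) x :=
  (mulCLM l m k).hasFDerivAt_of_bilinear hf hg

lemma HasFDerivAt.matrix_transpose {f : E → Matrix m k ℝ} {f' : E →L[ℝ] Matrix m k ℝ}
    (hf : HasFDerivAt f f' x) : HasFDerivAt (fun y => (f y)ᵀ) ((transposeCLM m k).comp f') x :=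
  (transposeCLM m k).hasFDerivAt.comp x hf

lemma exists_hasFDerivAt_transpose_mul_self (X : Matrix m k ℝ) :
    ∃ L : Matrix m k ℝ →L[ℝ] Matrix k k ℝ,
      HasFDerivAt (fun Y : Matrix m k ℝ => Yᵀ * Y) L X ∧ ∀ V, L V = Xᵀ * V + Vᵀ * X :=
  ⟨_, HasFDerivAt.matrix_mul (HasFDerivAt.matrix_transpose (hasFDerivAt_id X)) (hasFDerivAt_id X),
    fun _ => rfl⟩

end Calculus

section TraceIdentities

variable {m n : Type*} [Fintype m] [Fintype n]

lemma trace_mul_transpose_mul_add_of_transpose_eq {S : Matrix n n ℝ} (hS : Sᵀ = S)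
    (X V : Matrix m n ℝ) : (S * (Xᵀ * V + Vᵀ * X)).trace = 2 * ((X * S)ᵀ * V).trace := by
  have h : (S * (Vᵀ * X)).trace = (S * (Xᵀ * V)).trace := by
    rw [← trace_transpose, transpose_mul, transpose_mul, transpose_transpose, hS, trace_mul_comm]
  rw [Matrix.mul_add, trace_add, h, transpose_mul, hS, Matrix.mul_assoc]
  ring

variable {p : ℕ}

lemma transpose_Phi (W : Matrix (Fin p) (Fin p) ℝ) : (Phi W)ᵀ = Phi W := by
  rw [Phi, transpose_smul, transpose_add, transpose_transpose, add_comm]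

lemma trace_Phi_mul_of_transpose_eq {T : Matrix (Fin p) (Fin p) ℝ} (hT : Tᵀ = T)
    (W : Matrix (Fin p) (Fin p) ℝ) : (Phi W * T).trace = (Wᵀ * T).trace := by
  have h : (W * T).trace = (Wᵀ * T).trace := by
    rw [← trace_transpose, transpose_mul, hT, trace_mul_comm]
  rw [Phi, Matrix.smul_mul, Matrix.add_mul, trace_smul, trace_add, h, smul_eq_mul]
  ring

lemma transpose_Amap {n : ℕ} (X : Matrix (Fin n) (Fin p) ℝ) : (Amap X)ᵀ = Amap X := by
  rw [Amap, transpose_sub, transpose_smul, transpose_smul, transpose_one, transpose_mul,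
    transpose_transpose]

end TraceIdentities

section Gradients

variable {n p : ℕ}

lemma dualCLM_apply (G V : Matrix (Fin n) (Fin p) ℝ) : dualCLM G V = (Gᵀ * V).trace := rfl

lemma dualCLM_injective : Function.Injective (dualCLM (n := n) (p := p)) := by
  intro G G' h
  have h' : dualCLM G (G - G') = dualCLM G' (G - G') := by rw [h]
  rw [dualCLM_apply, dualCLM_apply] at h'
  have h0 : ‖G - G'‖ ^ 2 = 0 := by
    rw [frobenius_norm_sq_eq_trace, transpose_sub, Matrix.sub_mul, trace_sub, h', sub_self]
  simpa [sub_eq_zero] using h0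

lemma HasGradAt.unique {φ : Matrix (Fin n) (Fin p) ℝ → ℝ} {X G G' : Matrix (Fin n) (Fin p) ℝ}
    (h : HasGradAt φ X G) (h' : HasGradAt φ X G') : G = G' :=
  dualCLM_injective (HasFDerivAt.unique h h')

lemma HasGradAt.add {φ ψ : Matrix (Fin n) (Fin p) ℝ → ℝ} {X G G' : Matrix (Fin n) (Fin p) ℝ}
    (h : HasGradAt φ X G) (h' : HasGradAt ψ X G') :
    HasGradAt (fun Y => φ Y + ψ Y) X (G + G') :=
  (HasFDerivAt.add h h').congr_fderiv <| ContinuousLinearMap.ext fun V =>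
    show (Gᵀ * V).trace + (G'ᵀ * V).trace = ((G + G')ᵀ * V).trace by
      rw [transpose_add, Matrix.add_mul, trace_add]

lemma hasGradAt_g {f : Matrix (Fin n) (Fin p) ℝ → ℝ} {X G : Matrix (Fin n) (Fin p) ℝ}
    (hf : HasGradAt f (X * Amap X) G) : HasGradAt (g f) X (G * Amap X - X * Phi (Xᵀ * G)) := by
  obtain ⟨L, hL, hLV⟩ := exists_hasFDerivAt_transpose_mul_self X
  have hA : HasFDerivAt Amap (0 - (1 / 2 : ℝ) • L) X :=
    (hasFDerivAt_const _ X).sub (hL.const_smul (1 / 2 : ℝ))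
  unfold HasGradAt at hf ⊢
  refine (HasFDerivAt.comp X hf (HasFDerivAt.matrix_mul (hasFDerivAt_id X) hA)).congr_fderiv
    (ContinuousLinearMap.ext fun V => ?_)
  change (Gᵀ * (X * (0 - (1 / 2 : ℝ) • L V) + V * Amap X)).trace
    = ((G * Amap X - X * Phi (Xᵀ * G))ᵀ * V).trace
  have hT : (Xᵀ * V + Vᵀ * X)ᵀ = Xᵀ * V + Vᵀ * X := by
    rw [transpose_add, transpose_mul, transpose_mul, transpose_transpose, transpose_transpose,
      add_comm]
  have hX : (Gᵀ * (X * (Xᵀ * V + Vᵀ * X))).trace = 2 * ((X * Phi (Xᵀ * G))ᵀ * V).trace := by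
    have hGX : Gᵀ * X = (Xᵀ * G)ᵀ := by rw [transpose_mul, transpose_transpose]
    rw [← Matrix.mul_assoc, hGX, ← trace_Phi_mul_of_transpose_eq hT,
      trace_mul_transpose_mul_add_of_transpose_eq (transpose_Phi _)]
  have hV : (Gᵀ * (V * Amap X)).trace = ((G * Amap X)ᵀ * V).trace := by
    rw [trace_mul_comm, transpose_mul, transpose_Amap, trace_mul_comm _ V, Matrix.mul_assoc]
  rw [hLV, zero_sub, Matrix.mul_neg, Matrix.mul_smul, Matrix.mul_add, Matrix.mul_neg,
    Matrix.mul_smul, trace_add, trace_neg, trace_smul, hX, hV, transpose_sub, Matrix.sub_mul,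
    trace_sub, smul_eq_mul]
  ring

lemma hasGradAt_penalty (β : ℝ) (X : Matrix (Fin n) (Fin p) ℝ) :
    HasGradAt (fun Y => β / 4 * ‖Yᵀ * Y - 1‖ ^ 2) X (β • (X * (Xᵀ * X - 1))) := by
  obtain ⟨L, hL, hLV⟩ := exists_hasFDerivAt_transpose_mul_self X
  have hD := (frobeniusEquiv.toContinuousLinearEquiv.hasFDerivAt.comp X (hL.sub_const 1)).norm_sq
  simp only [Function.comp_def, LinearIsometryEquiv.coe_toContinuousLinearEquiv,
    LinearIsometryEquiv.norm_map] at hD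
  refine (hD.const_mul (β / 4)).congr_fderiv (ContinuousLinearMap.ext fun V => ?_)
  have hsym : (Xᵀ * X - 1)ᵀ = Xᵀ * X - 1 := by
    rw [transpose_sub, transpose_mul, transpose_transpose, transpose_one]
  change (β / 4) • (2 • inner ℝ (frobeniusEquiv (Xᵀ * X - 1)) (frobeniusEquiv (L V)))
    = ((β • (X * (Xᵀ * X - 1)))ᵀ * V).trace
  rw [smul_eq_mul, two_nsmul, inner_frobeniusEquiv, hLV, hsym,
    trace_mul_transpose_mul_add_of_transpose_eq hsym, transpose_smul, Matrix.smul_mul, trace_smul,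
    smul_eq_mul]
  ring

lemma trace_gradg_transpose_mul_penalty (G X : Matrix (Fin n) (Fin p) ℝ) :
    ((G * Amap X - X * Phi (Xᵀ * G))ᵀ * (X * (Xᵀ * X - 1))).trace
      = -(3 / 2) * (Phi (Xᵀ * G) * ((Xᵀ * X - 1) * (Xᵀ * X - 1))).trace := by
  set K := Xᵀ * X with hK
  have hKt : Kᵀ = K := by rw [hK, transpose_mul, transpose_transpose]
  have hA : Amap X = (3 / 2 : ℝ) • 1 - (1 / 2 : ℝ) • K := rfl
  have hDA : ((K - 1) * Amap X)ᵀ = (K - 1) * Amap X := by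
    rw [transpose_mul, transpose_Amap, transpose_sub, hKt, transpose_one, hA]
    simp only [Matrix.sub_mul, Matrix.mul_sub, Matrix.smul_mul, Matrix.mul_smul, Matrix.one_mul,
      Matrix.mul_one]
    module
  have hpoly : (K - 1) * Amap X - K * (K - 1) = -(3 / 2 : ℝ) • ((K - 1) * (K - 1)) := by
    rw [hA]
    simp only [Matrix.sub_mul, Matrix.mul_sub, Matrix.mul_smul, Matrix.one_mul, Matrix.mul_one]
    module
  have hG : (G * Amap X)ᵀ * (X * (K - 1)) = Amap X * ((Xᵀ * G)ᵀ * (K - 1)) := by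
    rw [transpose_mul, transpose_Amap, transpose_mul, transpose_transpose]
    simp only [Matrix.mul_assoc]
  have hX : (X * Phi (Xᵀ * G))ᵀ * (X * (K - 1)) = Phi (Xᵀ * G) * (K * (K - 1)) := by
    rw [transpose_mul, transpose_Phi, hK]
    simp only [Matrix.mul_assoc]
  rw [transpose_sub, Matrix.sub_mul, trace_sub, hG, hX, trace_mul_comm, Matrix.mul_assoc,
    ← trace_Phi_mul_of_transpose_eq hDA, ← trace_sub, ← Matrix.mul_sub, hpoly, Matrix.mul_smul,
    trace_smul, smul_eq_mul]

lemma Amap_eq_one_of_transpose_mul_self {X : Matrix (Fin n) (Fin p) ℝ} (hX : Xᵀ * X = 1) :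
    Amap X = 1 := by
  rw [Amap, hX, ← sub_smul]
  norm_num

end Gradients

section Estimates

variable {n p : ℕ}

lemma norm_Phi_le (W : Matrix (Fin p) (Fin p) ℝ) : ‖Phi W‖ ≤ ‖W‖ := by
  calc ‖Phi W‖ = 1 / 2 * ‖W + Wᵀ‖ := by rw [Phi, norm_smul, Real.norm_of_nonneg (by norm_num)]
    _ ≤ 1 / 2 * (‖W‖ + ‖Wᵀ‖) := by gcongr; exact norm_add_le _ _
    _ = ‖W‖ := by rw [frobenius_norm_transpose]; ring

lemma specNorm_le_of_norm_transpose_mul_self_sub_one_le {X : Matrix (Fin n) (Fin p) ℝ}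
    (hX : ‖Xᵀ * X - 1‖ ≤ 1 / 6) : specNorm X ≤ 13 / 12 :=
  (specNorm_le_sqrt X).trans <| Real.sqrt_le_iff.mpr ⟨by norm_num, by linarith⟩

lemma sq_add_sq_le_norm_gradh_sq {X G : Matrix (Fin n) (Fin p) ℝ} {β M₁ : ℝ}
    (hX : ‖Xᵀ * X - 1‖ ≤ 1 / 6) (hG : ‖G‖ ≤ M₁) (hβ : 12 * M₁ ≤ β) (hβ0 : 0 < β) :
    ‖G * Amap X - X * Phi (Xᵀ * G)‖ ^ 2 + (3 / 4 * (β * ‖Xᵀ * X - 1‖)) ^ 2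
      ≤ ‖G * Amap X - X * Phi (Xᵀ * G) + β • (X * (Xᵀ * X - 1))‖ ^ 2 := by
  set D := Xᵀ * X - 1
  have hXD : 5 / 6 * ‖D‖ ^ 2 ≤ ‖X * D‖ ^ 2 := by
    have := (abs_le.mp (abs_frobenius_norm_mul_sq_sub_le X D)).1
    nlinarith [sq_nonneg ‖D‖]
  have hΦ : ‖Phi (Xᵀ * G)‖ ≤ 13 / 12 * M₁ := by
    have hW : ‖Xᵀ * G‖ ^ 2 ≤ (13 / 12 * M₁) ^ 2 := by
      have := frobenius_norm_transpose_mul_sq_le X G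
      have : ‖G‖ ^ 2 ≤ M₁ ^ 2 := pow_le_pow_left₀ (norm_nonneg _) hG 2
      nlinarith [sq_nonneg ‖G‖]
    exact (norm_Phi_le _).trans
      (abs_le_of_sq_le_sq' hW (by linarith [(norm_nonneg G).trans hG])).2
  have htr : |(Phi (Xᵀ * G) * (D * D)).trace| ≤ 13 / 12 * M₁ * ‖D‖ ^ 2 := by
    calc _ = |((Phi (Xᵀ * G))ᵀ * (D * D)).trace| := by rw [transpose_Phi]
      _ ≤ ‖Phi (Xᵀ * G)‖ * ‖D * D‖ := abs_trace_transpose_mul_le _ _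
      _ ≤ 13 / 12 * M₁ * ‖D‖ ^ 2 := by
        rw [sq]; gcongr
        · linarith [(norm_nonneg G).trans hG]
        · exact frobenius_norm_mul D D
  -- The cross term costs at most `(13/48) β² ‖D‖²` since `12 M₁ ≤ β`, and `5/6 - 13/48 = 9/16`.
  rw [frobenius_norm_add_smul_sq, trace_gradg_transpose_mul_penalty]
  have h1 := (abs_le.mp htr).2
  nlinarith [mul_le_mul_of_nonneg_left hXD (sq_nonneg β), mul_le_mul_of_nonneg_left h1 hβ0.le,
    mul_le_mul_of_nonneg_right hβ (mul_nonneg hβ0.le (sq_nonneg ‖D‖))]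

lemma half_add_quarter_le_of_sq_add_sq_le {a b e c : ℝ} (hc : 0 ≤ c)
    (hsq : a ^ 2 + (3 / 4 * e) ^ 2 ≤ c ^ 2) (hb : b ≤ a + e / 6) : 1 / 2 * b + e / 4 ≤ c := by
  -- Cauchy–Schwarz: `(a/2 + e/3)² ≤ (1/4 + 16/81) (a² + (3e/4)²)`.
  have h : (a / 2 + e / 3) ^ 2 ≤ c ^ 2 := by nlinarith [sq_nonneg (4 / 9 * a - 3 / 8 * e)]
  linarith [abs_le_of_sq_le_sq' h hc]

end Estimates

theorem statement_15 {n p : ℕ} (f : Matrix (Fin n) (Fin p) ℝ → ℝ) (β M₁ M₂ : ℝ)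
    (gradf gradg : Matrix (Fin n) (Fin p) ℝ → Matrix (Fin n) (Fin p) ℝ)
    (hgradf : ∀ Y, HasGradAt f Y (gradf Y))
    (hgradg : ∀ Y, HasGradAt (g f) Y (gradg Y))
    (hG : ∀ Y : Matrix (Fin n) (Fin p) ℝ, specNorm Y ≤ 13 / 12 →
      ‖gradf (Y * Amap Y)‖ ≤ M₁)
    (hLipg : ∀ Y Z : Matrix (Fin n) (Fin p) ℝ, specNorm Y ≤ 13 / 12 →
      specNorm Z ≤ 13 / 12 → ‖gradg Y - gradg Z‖ ≤ M₂ * ‖Y - Z‖)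
    (hβ : max (12 * M₁) (6 * M₂) ≤ β) (hβ0 : 0 < β)
    (X : Matrix (Fin n) (Fin p) ℝ) (hX : ‖Xᵀ * X - 1‖ ≤ 1 / 6)
    (Gh : Matrix (Fin n) (Fin p) ℝ) (hGh : HasGradAt (hpen f β) X Gh) :
    1 / 2 * ‖gradf (Pst X) - Pst X * Phi ((Pst X)ᵀ * gradf (Pst X))‖
      + β / 4 * ‖Xᵀ * X - 1‖ ≤ ‖Gh‖ := by
  have hK := posDef_transpose_mul_self_of_norm_lt_one (hX.trans_lt (by norm_num))
  have hPP := transpose_Pst_mul_Pst hK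
  have hspecX := specNorm_le_of_norm_transpose_mul_self_sub_one_le hX
  have hspecP : specNorm (Pst X) ≤ 13 / 12 :=
    specNorm_le_of_norm_transpose_mul_self_sub_one_le (by rw [hPP, sub_self, norm_zero]; norm_num)
  have hgX := (hgradg X).unique (hasGradAt_g (hgradf _))
  have hgP := (hgradg (Pst X)).unique (hasGradAt_g (hgradf _))
  simp only [Amap_eq_one_of_transpose_mul_self hPP, Matrix.mul_one] at hgP
  have hGh' : Gh = gradg X + β • (X * (Xᵀ * X - 1)) :=
    hGh.unique ((hgradg X).add (hasGradAt_penalty β X))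
  have hM₂ : max M₂ 0 * ‖X - Pst X‖ ≤ β / 6 * ‖Xᵀ * X - 1‖ :=
    mul_le_mul (max_le (by linarith [le_max_right (12 * M₁) (6 * M₂)]) (by positivity))
      (frobenius_norm_sub_Pst_le hK) (norm_nonneg _) (by positivity)
  have hLip : ‖gradg (Pst X)‖ ≤ ‖gradg X‖ + β * ‖Xᵀ * X - 1‖ / 6 := by
    have := norm_le_insert' (gradg (Pst X)) (gradg X)
    linarith [hLipg X (Pst X) hspecX hspecP, norm_sub_rev (gradg X) (gradg (Pst X)),
      mul_le_mul_of_nonneg_right (le_max_left M₂ 0) (norm_nonneg (X - Pst X))]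
  have hsq := sq_add_sq_le_norm_gradh_sq hX (hG X hspecX) ((le_max_left _ _).trans hβ) hβ0
  rw [← hgX, ← hGh'] at hsq
  rw [← hgP]
  linarith [half_add_quarter_le_of_sq_add_sq_le (norm_nonneg Gh) hsq hLip]

end ExPen
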